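/- Let n, r be positive integers with r ≤ n, let U* ∈ ℝ^{n×r} have all row entries nonzero, set M* = U* U*ᵀ and Ω = {(i,j) ∈ [n]×[n] : M*_{ij} ≥ 0}. Suppose Assumptions 1 and 2 hold. If D ∈ ℝ^{n×r} satisfies (U* Dᵀ + D U*ᵀ)_Ω = 0, then there exists a skew-symmetric matrix V ∈ ℝ^{r×r} (V + Vᵀ = 0) such that D = U* V. -/

import Mathlib

/-!
Every orthant block `B_i` has pairwise nonnegative inner products `⟨u*_k, u*_l⟩`, so
`U* Dᵀ + D U*ᵀ` vanishes on `B_i × B_i`. Since `U*_i` has a left inverse (Assumption 1), this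
forces `D = U* V_i` on the rows of `B_i` with `V_i` skew-symmetric. For consecutive blocks in the
Gray code, each observed entry `(k, l) ∈ Ω_{i+1,i}` gives `u*_kᵀ (V_{i+1} - V_i) u*_l = 0`, i.e.
`V_{i+1} - V_i` is Frobenius-orthogonal to `u*_k (u*_l)ᵀ`; by Assumption 2 these span, so
`V_{i+1} = V_i`. As `s` enumerates every sign pattern, every row lies in some block.
-/

open Matrix Classical

noncomputable section

/-- Frobenius norm of a real matrix. -/
def frobNorm {m k : Type*} [Fintype m] [Fintype k] (A : Matrix m k ℝ) : ℝ :=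
  Real.sqrt (∑ i, ∑ j, (A i j) ^ 2)

/-- Frobenius (trace) inner product ⟨A, B⟩ = trace(Aᵀ B). -/
def frobInner {m k : Type*} [Fintype m] [Fintype k] (A B : Matrix m k ℝ) : ℝ :=
  ∑ i, ∑ j, A i j * B i j

/-- `(X)_Ω`: keep entries in `Ω`, zero out the rest. -/
def mask {m : Type*} (Ω : Set (m × m)) (X : Matrix m m ℝ) : Matrix m m ℝ :=
  Matrix.of fun i j => if (i, j) ∈ Ω then X i j else 0

/-- ReLU sampling set: the nonnegative entries of `M`. -/
def reluSet {n : ℕ} (M : Matrix (Fin n) (Fin n) ℝ) : Set (Fin n × Fin n) :=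
  {p | 0 ≤ M p.1 p.2}

/-- The objective `F(U) = (1/4) ‖(U Uᵀ − M)_Ω‖_F²`. -/
def objF {n r : ℕ} (Ω : Set (Fin n × Fin n)) (M : Matrix (Fin n) (Fin n) ℝ)
    (U : Matrix (Fin n) (Fin r) ℝ) : ℝ :=
  (1 / 4) * frobNorm (mask Ω (U * Uᵀ - M)) ^ 2

/-- Rows of `U` whose sign pattern is `s` (`s j = true` means positive entry). -/
def signBlock {n r : ℕ} (U : Matrix (Fin n) (Fin r) ℝ) (s : Fin r → Bool) : Set (Fin n) :=
  {k | ∀ j, (0 < U k j ↔ s j = true)}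

/-- A Gray-code ordering of the `2^r` sign patterns: a bijective enumeration in which
consecutive patterns differ in exactly one coordinate. -/
def IsGrayCode {r : ℕ} (s : Fin (2 ^ r) → Fin r → Bool) : Prop :=
  Function.Bijective s ∧
    ∀ i : ℕ, ∀ h : i + 1 < 2 ^ r,
      ∃! j : Fin r, s ⟨i, Nat.lt_of_succ_lt h⟩ j ≠ s ⟨i + 1, h⟩ j

/-- Assumption 1: each orthant submatrix `U*_i` has full column rank `r`. -/
def Assumption1 {n r : ℕ} (U : Matrix (Fin n) (Fin r) ℝ)
    (s : Fin (2 ^ r) → Fin r → Bool) : Prop :=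
  ∀ i : Fin (2 ^ r),
    Matrix.rank (Matrix.of fun (k : ↥(signBlock U (s i))) (j : Fin r) => U k.1 j) = r

/-- Assumption 2: for consecutive orthants, the observed rank-one matrices
`u*_k (u*_l)ᵀ` with `(k,l) ∈ Ω_{i+1,i}` span `ℝ^{r×r}`. -/
def Assumption2 {n r : ℕ} (U : Matrix (Fin n) (Fin r) ℝ)
    (s : Fin (2 ^ r) → Fin r → Bool) : Prop :=
  ∀ i : ℕ, ∀ h : i + 1 < 2 ^ r,
    Submodule.span ℝ
      {A : Matrix (Fin r) (Fin r) ℝ |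
        ∃ k l : Fin n, k ∈ signBlock U (s ⟨i + 1, h⟩) ∧
          l ∈ signBlock U (s ⟨i, Nat.lt_of_succ_lt h⟩) ∧
          0 ≤ ∑ j, U k j * U l j ∧
          A = Matrix.of fun a b => U k a * U l b} = ⊤

namespace Matrix

section

variable {m n K : Type*} [Fintype m] [Fintype n] [DecidableEq n]

theorem isUnit_of_rank_eq_card [Field K] {G : Matrix n n K} (h : G.rank = Fintype.card n) :
    IsUnit G := by
  refine mulVec_surjective_iff_isUnit.mp fun y => ?_
  have htop : LinearMap.range G.mulVecLin = ⊤ :=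
    Submodule.eq_top_of_finrank_eq (by simpa [Matrix.rank] using h)
  exact LinearMap.range_eq_top.mp htop y

theorem exists_mul_eq_one_of_rank_eq_card [Field K] [LinearOrder K] [IsStrictOrderedRing K]
    {A : Matrix m n K} (h : A.rank = Fintype.card n) : ∃ L : Matrix n m K, L * A = 1 := by
  have hG : IsUnit (Aᵀ * A) := isUnit_of_rank_eq_card (by rw [rank_transpose_mul_self, h])
  refine ⟨(Aᵀ * A)⁻¹ * Aᵀ, ?_⟩
  rw [Matrix.mul_assoc, nonsing_inv_mul _ ((isUnit_iff_isUnit_det _).mp hG)]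

theorem exists_eq_mul_skew_of_mul_transpose_add_eq_zero [CommRing K] {A B : Matrix m n K}
    {L : Matrix n m K} (hL : L * A = 1) (h : A * Bᵀ + B * Aᵀ = 0) :
    ∃ W : Matrix n n K, W + Wᵀ = 0 ∧ B = A * W := by
  have hB : B = A * -(L * B)ᵀ := by
    have : Bᵀ = -(L * B * Aᵀ) := calc
      Bᵀ = L * (A * Bᵀ) := by rw [← Matrix.mul_assoc, hL, Matrix.one_mul]
      _ = -(L * B * Aᵀ) := by rw [eq_neg_of_add_eq_zero_left h, Matrix.mul_neg, Matrix.mul_assoc]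
    simpa [Matrix.transpose_mul] using congrArg transpose this
  refine ⟨-(L * B)ᵀ, ?_, hB⟩
  have hW : A * (-(L * B)ᵀ + (-(L * B)ᵀ)ᵀ) * Aᵀ = 0 := by
    rw [Matrix.mul_add, Matrix.add_mul, ← hB, Matrix.mul_assoc, ← Matrix.transpose_mul, ← hB,
      add_comm, h]
  simpa [← Matrix.mul_assoc, hL, Matrix.mul_assoc _ Aᵀ, ← Matrix.transpose_mul] using
    congrArg (fun X => L * X * Lᵀ) hW

end

section

variable {m r : Type*} [Fintype r]

theorem frobInner_vecMulVec (u v : r → ℝ) (X : Matrix r r ℝ) :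
    frobInner (vecMulVec u v) X = u ⬝ᵥ X *ᵥ v := by
  simp only [frobInner, vecMulVec_apply, dotProduct, mulVec, Finset.mul_sum]
  exact Finset.sum_congr rfl fun _ _ => Finset.sum_congr rfl fun _ _ => by ring

theorem eq_zero_of_frobInner_eq_zero [DecidableEq r] {S : Set (Matrix r r ℝ)} {X : Matrix r r ℝ}
    (hS : Submodule.span ℝ S = ⊤) (hX : ∀ M ∈ S, frobInner M X = 0) : X = 0 := by
  have hall : ∀ M, frobInner M X = 0 := fun M => by
    induction (hS ▸ Submodule.mem_top : M ∈ Submodule.span ℝ S) using Submodule.span_induction with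
    | mem M hM => exact hX M hM
    | zero => simp [frobInner]
    | add M N _ _ hM hN => simp_all [frobInner, add_mul, Finset.sum_add_distrib]
    | smul c M _ hM => simp_all [frobInner, mul_assoc, ← Finset.mul_sum]
  ext a b
  simpa [frobInner, single_apply, ite_and] using hall (single a b 1)

theorem exists_skew_forall_mem_eq_vecMul [Fintype m] [DecidableEq r] {U D : Matrix m r ℝ}
    {S : Set m}
    (hrank : (U.submatrix (Subtype.val : S → m) id).rank = Fintype.card r)
    (hrel : ∀ k ∈ S, ∀ l ∈ S, U k ⬝ᵥ D l + D k ⬝ᵥ U l = 0) :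
    ∃ W : Matrix r r ℝ, W + Wᵀ = 0 ∧ ∀ k ∈ S, D k = U k ᵥ* W := by
  set A := U.submatrix (Subtype.val : S → m) id
  set B := D.submatrix (Subtype.val : S → m) id
  obtain ⟨L, hL⟩ := exists_mul_eq_one_of_rank_eq_card hrank
  have hsub : A * Bᵀ + B * Aᵀ = 0 := by
    ext k l
    simpa [A, B, mul_apply, dotProduct, mul_comm] using hrel k k.2 l l.2
  obtain ⟨W, hW, hDW⟩ := exists_eq_mul_skew_of_mul_transpose_add_eq_zero hL hsub
  exact ⟨W, hW, fun k hk => congrFun hDW ⟨k, hk⟩⟩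

theorem eq_of_forall_mem_eq_vecMul_of_span_eq_top [DecidableEq r] {U D : Matrix m r ℝ}
    {S T : Set m} {V W : Matrix r r ℝ} (hV : V + Vᵀ = 0)
    (hDV : ∀ l ∈ T, D l = U l ᵥ* V) (hDW : ∀ k ∈ S, D k = U k ᵥ* W)
    (hrel : ∀ k ∈ S, ∀ l ∈ T, 0 ≤ U k ⬝ᵥ U l → U k ⬝ᵥ D l + D k ⬝ᵥ U l = 0)
    (hspan : Submodule.span ℝ {A | ∃ k l, k ∈ S ∧ l ∈ T ∧ 0 ≤ U k ⬝ᵥ U l ∧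
      A = vecMulVec (U k) (U l)} = ⊤) :
    W = V := by
  have hX : Vᵀ + W = 0 := by
    refine eq_zero_of_frobInner_eq_zero hspan ?_
    rintro _ ⟨k, l, hk, hl, hkl, rfl⟩
    calc frobInner (vecMulVec (U k) (U l)) (Vᵀ + W)
        = U k ⬝ᵥ D l + D k ⬝ᵥ U l := by
          rw [frobInner_vecMulVec, hDV l hl, hDW k hk, add_mulVec, dotProduct_add,
            mulVec_transpose, dotProduct_mulVec]
      _ = 0 := hrel k hk l hl hkl
  exact (neg_eq_of_add_eq_zero_right hX).symm.trans (neg_eq_of_add_eq_zero_left hV)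

end

end Matrix

theorem dotProduct_nonneg_of_mem_signBlock {n r : ℕ} {U : Matrix (Fin n) (Fin r) ℝ}
    {t : Fin r → Bool} {k l : Fin n} (hk : k ∈ signBlock U t) (hl : l ∈ signBlock U t) :
    0 ≤ U k ⬝ᵥ U l := by
  refine Finset.sum_nonneg fun j _ => ?_
  by_cases ht : t j = true
  · exact (mul_pos ((hk j).2 ht) ((hl j).2 ht)).le
  · exact mul_nonneg_of_nonpos_of_nonpos (not_lt.1 fun h => ht ((hk j).1 h))
      (not_lt.1 fun h => ht ((hl j).1 h))

theorem mem_signBlock_sign {n r : ℕ} (U : Matrix (Fin n) (Fin r) ℝ) (k : Fin n) :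
    k ∈ signBlock U fun j => decide (0 < U k j) :=
  fun j => by simp

theorem dotProduct_add_eq_zero_of_mask_eq_zero {n r : ℕ} {U D : Matrix (Fin n) (Fin r) ℝ}
    (hD : mask (reluSet (U * Uᵀ)) (U * Dᵀ + D * Uᵀ) = 0) {k l : Fin n}
    (hkl : 0 ≤ U k ⬝ᵥ U l) : U k ⬝ᵥ D l + D k ⬝ᵥ U l = 0 := by
  have hkl' : (k, l) ∈ reluSet (U * Uᵀ) := by simpa [reluSet, mul_apply, dotProduct] using hkl
  simpa [mask, hkl', mul_apply, dotProduct, mul_comm] using congrFun (congrFun hD k) l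

theorem statement6_general {n r : ℕ}
    (Ustar : Matrix (Fin n) (Fin r) ℝ)
    (s : Fin (2 ^ r) → Fin r → Bool) (hs : IsGrayCode s)
    (hA1 : Assumption1 Ustar s) (hA2 : Assumption2 Ustar s)
    (D : Matrix (Fin n) (Fin r) ℝ)
    (hD : mask (reluSet (Ustar * Ustarᵀ)) (Ustar * Dᵀ + D * Ustarᵀ) = 0) :
    ∃ V : Matrix (Fin r) (Fin r) ℝ, V + Vᵀ = 0 ∧ D = Ustar * V := by
  have hrel : ∀ k l, 0 ≤ Ustar k ⬝ᵥ Ustar l → Ustar k ⬝ᵥ D l + D k ⬝ᵥ Ustar l = 0 :=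
    fun _ _ => dotProduct_add_eq_zero_of_mask_eq_zero hD
  choose V hVskew hVrows using fun i => Matrix.exists_skew_forall_mem_eq_vecMul
    ((hA1 i).trans (Fintype.card_fin r).symm)
    fun k hk l hl => hrel k l (dotProduct_nonneg_of_mem_signBlock (t := s i) hk hl)
  have hstep : ∀ i (h : i + 1 < 2 ^ r), V ⟨i + 1, h⟩ = V ⟨i, Nat.lt_of_succ_lt h⟩ := fun i h =>
    Matrix.eq_of_forall_mem_eq_vecMul_of_span_eq_top (hVskew _) (hVrows _) (hVrows _)
      (fun k _ l _ => hrel k l) (hA2 i h)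
  have hconst : ∀ i (h : i < 2 ^ r), V ⟨i, h⟩ = V ⟨0, Nat.two_pow_pos r⟩ := by
    intro i
    induction i with
    | zero => exact fun _ => rfl
    | succ i ih => exact fun h => (hstep i h).trans (ih _)
  refine ⟨V ⟨0, Nat.two_pow_pos r⟩, hVskew _, ?_⟩
  funext k
  obtain ⟨i, hi⟩ := hs.1.2 fun j => decide (0 < Ustar k j)
  rw [mul_apply_eq_vecMul, ← hconst i i.2]
  exact hVrows i k (hi ▸ mem_signBlock_sign Ustar k)

/-- under ReLU sampling and Assumptions 1 and 2, any direction `D` with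
`(U* Dᵀ + D U*ᵀ)_Ω = 0` is of the form `D = U* V` with `V` skew-symmetric. -/
theorem statement6 {n r : ℕ} (hn : 0 < n) (hr : 0 < r) (hrn : r ≤ n)
    (Ustar : Matrix (Fin n) (Fin r) ℝ) (hnz : ∀ k j, Ustar k j ≠ 0)
    (s : Fin (2 ^ r) → Fin r → Bool) (hs : IsGrayCode s)
    (hA1 : Assumption1 Ustar s) (hA2 : Assumption2 Ustar s)
    (D : Matrix (Fin n) (Fin r) ℝ)
    (hD : mask (reluSet (Ustar * Ustarᵀ)) (Ustar * Dᵀ + D * Ustarᵀ) = 0) :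
    ∃ V : Matrix (Fin r) (Fin r) ℝ, V + Vᵀ = 0 ∧ D = Ustar * V :=
  statement6_general Ustar s hs hA1 hA2 D hD
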